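/- arXiv:1004.3010 — 10 statements merged into one kernel-verified Lean document; each statement's English description precedes it below -/
import Mathlib

section
/- Let a, b be elements of a group G and H a finite subgroup of G. If A ⊆ aH and B ⊆ Hb are finite subsets with |A| + |B| > |H|, then the product set AB equals aHb. -/
open Pointwise

theorem stmt0 {G : Type*} [Group G] (H : Subgroup G) (hH : (H : Set G).Finite)
    (a b : G) (A B : Set G) (hA : A.Finite) (hB : B.Finite)
    (hAsub : A ⊆ a • (H : Set G)) (hBsub : B ⊆ (H : Set G) * {b})
    (hcard : (H : Set G).ncard < A.ncard + B.ncard) :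
    A * B = {a} * (H : Set G) * {b} := by
  apply Set.Subset.antisymm
  · rintro z ⟨x, hx, y, hy, rfl⟩
    obtain ⟨h1, hh1, rfl⟩ := hAsub hx
    obtain ⟨h2, hh2, c, hc, rfl⟩ := hBsub hy
    rw [Set.mem_singleton_iff] at hc
    refine ⟨a * (h1 * h2), ⟨a, rfl, h1 * h2, mul_mem hh1 hh2, rfl⟩, b, rfl, ?_⟩
    rw [hc]
    simp [smul_eq_mul, mul_assoc]
  · rintro z ⟨w, ⟨a', ha', h, hh, rfl⟩, c, hc, rfl⟩
    obtain rfl : a = a' := ha'.symm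
    obtain rfl : b = c := hc.symm
    -- z = a * h * b, find x ∈ A, y ∈ B with x * y = a * h * b
    have hSsub : a⁻¹ • A ⊆ (H : Set G) := by
      rintro _ ⟨x, hx, rfl⟩
      obtain ⟨h1, hh1, rfl⟩ := hAsub hx
      simpa using hh1
    have hTsub : (h * b) • B⁻¹ ⊆ (H : Set G) := by
      rintro _ ⟨y, hy, rfl⟩
      obtain ⟨h2, hh2, c, hc, heq⟩ := hBsub (Set.mem_inv.mp hy)
      rw [Set.mem_singleton_iff] at hc
      have hinv : y⁻¹ = h2 * b := by rw [← heq, hc]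
      have hyeq : y = (h2 * b)⁻¹ := by rw [← hinv]; simp
      show (h * b) • y ∈ (H : Set G)
      have : (h * b) • y = h * h2⁻¹ := by rw [hyeq]; simp [smul_eq_mul]
      rw [this]
      exact mul_mem hh (inv_mem hh2)
    have hScard : (a⁻¹ • A).ncard = A.ncard := Set.ncard_smul_set _ _
    have hTcard : ((h * b) • B⁻¹).ncard = B.ncard := by
      rw [Set.ncard_smul_set, Set.ncard_inv]
    have hne : ((a⁻¹ • A) ∩ ((h * b) • B⁻¹)).Nonempty := by
      by_contra hdisj
      rw [Set.not_nonempty_iff_eq_empty] at hdisj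
      have hdj : Disjoint (a⁻¹ • A) ((h * b) • B⁻¹) :=
        Set.disjoint_iff_inter_eq_empty.mpr hdisj
      have hun := Set.ncard_union_eq hdj (hA.smul_set) (hB.inv.smul_set)
      have hle : ((a⁻¹ • A) ∪ ((h * b) • B⁻¹)).ncard ≤ (H : Set G).ncard :=
        Set.ncard_le_ncard (Set.union_subset hSsub hTsub) hH
      omega
    obtain ⟨u, ⟨x, hx, hxu⟩, y, hy, hyu⟩ := hne
    have hyB : y⁻¹ ∈ B := hy
    refine ⟨x, hx, y⁻¹, hyB, ?_⟩
    have hx2 : a⁻¹ * x = h * b * y := by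
      have := hxu.trans hyu.symm
      simpa [smul_eq_mul] using this
    have : x = a * (h * b * y) := by rw [← hx2]; group
    rw [this]; group
end

section
/- Let G be a group and A a finite nonempty subset of G. If the left stabilizer Q = {x : xA = A} satisfies |{a⁻¹A : a ∈ A}| ≤ 2, then either A is a right coset of Q or A = Q a₁ ∪ Q a₂ for some a₁, a₂ ∈ A; in particular if 1 ∈ A and a⁻¹A takes at most two values for a ∈ A, then A = Q ∪ Qa for some a ∈ A. -/
open Pointwise

theorem stmt2 {G : Type*} [Group G] (A : Set G) (hA : A.Finite) (h1 : (1 : G) ∈ A)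
    (ht : {B : Set G | ∃ a ∈ A, B = a⁻¹ • A}.ncard ≤ 2) :
    ((∃ a ∈ A, A = {x : G | x • A = A} * {a}) ∨
      (∃ a₁ ∈ A, ∃ a₂ ∈ A,
        A = {x : G | x • A = A} * {a₁} ∪ {x : G | x • A = A} * {a₂})) ∧
    (∃ a ∈ A, A = {x : G | x • A = A} ∪ {x : G | x • A = A} * {a}) := by
  set Q : Set G := {x : G | x • A = A} with hQdef
  have hQ1 : Q * ({1} : Set G) = Q := by simp [Set.mul_singleton]
  have hQsubA : Q ⊆ A := by
    intro q hq
    have : q • A = A := hq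
    have : q * 1 ∈ q • A := ⟨1, h1, rfl⟩
    rw [mul_one] at this
    rwa [hq] at this
  have hQA : ∀ a ∈ A, Q * {a} ⊆ A := by
    intro a ha x hx
    obtain ⟨q, hq, b, hb, rfl⟩ := hx
    rcases hb with rfl
    have hq' : q • A = A := hq
    have : q * b ∈ q • A := ⟨b, ha, rfl⟩
    rwa [hq'] at this
  have key : ∀ a b : G, a⁻¹ • A = b⁻¹ • A ↔ b ∈ Q * {a} := by
    intro a b
    constructor
    · intro h
      refine ⟨b * a⁻¹, ?_, a, rfl, by group⟩
      show (b * a⁻¹) • A = A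
      rw [mul_smul, h, smul_smul, mul_inv_cancel, one_smul]
    · rintro ⟨q, hq, c, rfl, rfl⟩
      have hq' : q • A = A := hq
      have hinv : q⁻¹ • A = A := by rw [inv_smul_eq_iff]; exact hq'.symm
      rw [mul_inv_rev, mul_smul, hinv]
  by_cases hall : ∀ a ∈ A, a⁻¹ • A = A
  · have hAQ : A = Q := by
      apply Set.Subset.antisymm _ hQsubA
      intro a ha
      have h := hall a ha
      show a • A = A
      calc a • A = a • (a⁻¹ • A) := by rw [h]
        _ = A := by rw [smul_smul]; group; simp
    constructor
    · exact Or.inl ⟨1, h1, by rw [hQ1, hAQ]⟩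
    · exact ⟨1, h1, by rw [hQ1, hAQ, Set.union_self]⟩
  · push_neg at hall
    obtain ⟨a₀, ha₀, hne⟩ := hall
    have hS : ∀ a ∈ A, a⁻¹ • A = A ∨ a⁻¹ • A = a₀⁻¹ • A := by
      intro a ha
      by_contra h
      push_neg at h
      obtain ⟨h1', h2'⟩ := h
      have hsub : ({A, a₀⁻¹ • A, a⁻¹ • A} : Set (Set G)) ⊆
          {B : Set G | ∃ a ∈ A, B = a⁻¹ • A} := by
        rintro B (rfl | rfl | rfl)
        · exact ⟨1, h1, by simp⟩
        · exact ⟨a₀, ha₀, rfl⟩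
        · exact ⟨a, ha, rfl⟩
      have hfin : {B : Set G | ∃ a ∈ A, B = a⁻¹ • A}.Finite := by
        have : {B : Set G | ∃ a ∈ A, B = a⁻¹ • A} = (fun a => a⁻¹ • A) '' A := by
          ext B; simp [eq_comm]
        rw [this]; exact hA.image _
      have h3 : ({A, a₀⁻¹ • A, a⁻¹ • A} : Set (Set G)).ncard = 3 := by
        rw [Set.ncard_insert_of_notMem (by simp [Ne.symm hne, Ne.symm h1'])
          ((Set.finite_singleton _).insert _),
          Set.ncard_insert_of_notMem (by simp [Ne.symm h2']) (Set.finite_singleton _),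
          Set.ncard_singleton]
      have := Set.ncard_le_ncard hsub hfin
      omega
    have hAeq : A = Q ∪ Q * {a₀} := by
      apply Set.Subset.antisymm
      · intro a ha
        rcases hS a ha with h | h
        · left
          show a • A = A
          calc a • A = a • (a⁻¹ • A) := by rw [h]
            _ = A := by rw [smul_smul]; group; simp
        · exact Or.inr ((key a₀ a).mp h.symm)
      · exact Set.union_subset hQsubA (hQA a₀ ha₀)
    refine ⟨Or.inr ⟨1, h1, a₀, ha₀, by rw [hQ1, hAeq]⟩, a₀, ha₀, hAeq⟩
end

section
/- Let G be a group, S a finite subset with 1 ∈ S, and H a finite subgroup of G. Suppose |HS| - |H| ≤ |S| - 1 and H is a proper subgroup of the group generated by S (so that S is not contained in a single right coset of H, i.e., HS meets at least two right cosets of H). Then there exists a ∈ S such that S⁻¹HS = S⁻¹S ∪ a⁻¹Ha. -/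
/-!
Choose `a ∈ S` with `|S ∩ Ha|` least. For `s, t ∈ S` with `Hs ≠ Ht`, the set `HS` contains
`Hs ∪ Ht ∪ S`, so `|HS| < |H| + |S|` forces `|S ∩ Hs| + |S ∩ Ht| > |H|`. Now take `s⁻¹ h t` with
`s, t ∈ S`. If both lie in `Ha`, it lies in `a⁻¹ H a`. Otherwise one of them, say `s`, is outside
`Ha`, and by minimality `|S ∩ Hs| + |S ∩ Ht| ≥ |S ∩ Hs| + |S ∩ Ha| > |H|`. Then
`(S ∩ Hs) s⁻¹ h t` and `S ∩ Ht` are subsets of the coset `Ht` of total size exceeding `|H|`, so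
`u s⁻¹ h t = v` for some `u, v ∈ S`, i.e. `s⁻¹ h t = u⁻¹ v ∈ S⁻¹ S`.
-/

open Pointwise
open scoped RightActions

theorem Set.inter_nonempty_of_ncard_lt_ncard_add_ncard {α : Type*} {s t u : Set α}
    (hs : s.Finite) (hts : t ⊆ s) (hus : u ⊆ s) (h : s.ncard < t.ncard + u.ncard) :
    (t ∩ u).Nonempty := by
  rw [Set.nonempty_iff_ne_empty]
  intro htu
  have hunion := Set.ncard_union_add_ncard_inter t u (hs.subset hts) (hs.subset hus)
  have hle := Set.ncard_le_ncard (Set.union_subset hts hus) hs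
  rw [htu, Set.ncard_empty] at hunion
  omega

section RightCosets

variable {G : Type*} [Group G] {H : Subgroup G} {S : Set G} {s t h : G}

theorem disjoint_rightCoset_of_mul_inv_notMem (hst : t * s⁻¹ ∉ H) :
    Disjoint ((H : Set G) <• s) ((H : Set G) <• t) := by
  refine Set.disjoint_left.2 fun x hxs hxt => hst ?_
  rw [mem_rightCoset_iff] at hxs hxt
  simpa [mul_assoc] using H.mul_mem (H.inv_mem hxt) hxs

theorem two_mul_ncard_add_ncard_le_ncard_mul_add_ncard_inter_rightCoset_add
    (hS : S.Finite) (hH : (H : Set G).Finite) (hs : s ∈ S) (ht : t ∈ S) (hst : t * s⁻¹ ∉ H) :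
    2 * (H : Set G).ncard + S.ncard ≤
      ((H : Set G) * S).ncard + (S ∩ (H : Set G) <• s).ncard + (S ∩ (H : Set G) <• t).ncard := by
  set C := (H : Set G) <• s ∪ (H : Set G) <• t
  have hdisj := disjoint_rightCoset_of_mul_inv_notMem hst
  have hC : C.ncard = 2 * (H : Set G).ncard := by
    rw [Set.ncard_union_eq hdisj hH.smul_set hH.smul_set, Set.ncard_smul_set,
      Set.ncard_smul_set, two_mul]
  have hSC : (S ∩ C).ncard = (S ∩ (H : Set G) <• s).ncard + (S ∩ (H : Set G) <• t).ncard := by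
    rw [Set.inter_union_distrib_left]
    exact Set.ncard_union_eq (hdisj.mono Set.inter_subset_right Set.inter_subset_right)
      (hS.inter_of_left _) (hS.inter_of_left _)
  have hsub : C ∪ S ⊆ (H : Set G) * S :=
    Set.union_subset (Set.union_subset (Set.op_smul_set_subset_mul hs)
      (Set.op_smul_set_subset_mul ht)) (Set.subset_mul_right S H.one_mem)
  have hunion := Set.ncard_union_add_ncard_inter C S (hH.smul_set.union hH.smul_set) hS
  have hle := Set.ncard_le_ncard hsub (hH.mul hS)
  rw [Set.inter_comm] at hunion
  omega

theorem inv_mul_mul_mem_inv_mul_of_ncard_lt_add (hH : (H : Set G).Finite) (hh : h ∈ H)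
    (hlt : (H : Set G).ncard < (S ∩ (H : Set G) <• s).ncard + (S ∩ (H : Set G) <• t).ncard) :
    s⁻¹ * h * t ∈ S⁻¹ * S := by
  set x := s⁻¹ * h * t
  have hmaps : (· * x) '' (S ∩ (H : Set G) <• s) ⊆ (H : Set G) <• t := by
    rintro _ ⟨u, ⟨-, hu⟩, rfl⟩
    rw [mem_rightCoset_iff] at hu ⊢
    simpa [x, mul_assoc] using H.mul_mem hu hh
  have hcard : ((· * x) '' (S ∩ (H : Set G) <• s)).ncard = (S ∩ (H : Set G) <• s).ncard :=
    Set.ncard_image_of_injective _ (mul_left_injective x)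
  obtain ⟨_, ⟨u, ⟨hu, -⟩, rfl⟩, hv, -⟩ :=
    Set.inter_nonempty_of_ncard_lt_ncard_add_ncard hH.smul_set hmaps Set.inter_subset_right
      (by rwa [hcard, Set.ncard_smul_set])
  exact ⟨u⁻¹, Set.inv_mem_inv.2 hu, u * x, hv, by group⟩

end RightCosets

theorem stmt4_general {G : Type*} [Group G] (S : Set G) (hS : S.Finite) (h1 : (1 : G) ∈ S)
    (H : Subgroup G) (hHfin : (H : Set G).Finite)
    (hcard : ((H : Set G) * S).ncard + 1 ≤ (H : Set G).ncard + S.ncard) :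
    ∃ a ∈ S, S⁻¹ * (H : Set G) * S = S⁻¹ * S ∪ {a⁻¹} * (H : Set G) * {a} := by
  obtain ⟨a, haS, hmin⟩ :=
    S.exists_min_image (fun b => (S ∩ (H : Set G) <• b).ncard) hS ⟨1, h1⟩
  have hbig : ∀ b ∈ S, a * b⁻¹ ∉ H → ∀ c ∈ S,
      (H : Set G).ncard < (S ∩ (H : Set G) <• b).ncard + (S ∩ (H : Set G) <• c).ncard :=
    fun b hb hab c hc => by
      have hsum :=
        two_mul_ncard_add_ncard_le_ncard_mul_add_ncard_inter_rightCoset_add hS hHfin hb haS hab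
      have hac := hmin c hc
      omega
  refine ⟨a, haS, subset_antisymm ?_ (Set.union_subset ?_ ?_)⟩
  · rintro _ ⟨_, ⟨s', hs', h, hh, rfl⟩, t, ht, rfl⟩
    obtain ⟨s, hs, rfl⟩ : ∃ s ∈ S, s⁻¹ = s' := ⟨s'⁻¹, hs', inv_inv s'⟩
    by_cases hboth : a * s⁻¹ ∈ H ∧ a * t⁻¹ ∈ H
    · refine Or.inr ⟨a⁻¹ * (a * s⁻¹ * h * (a * t⁻¹)⁻¹), ⟨a⁻¹, rfl, _, ?_, rfl⟩, a, rfl, by group⟩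
      exact H.mul_mem (H.mul_mem hboth.1 hh) (H.inv_mem hboth.2)
    refine Or.inl (inv_mul_mul_mem_inv_mul_of_ncard_lt_add hHfin hh ?_)
    rcases not_and_or.1 hboth with hsa | hta
    · exact hbig s hs hsa t ht
    · simpa only [add_comm] using hbig t ht hta s hs
  · simpa using Set.mul_subset_mul_right (Set.mul_subset_mul_left (s := S⁻¹)
      (Set.singleton_subset_iff.2 H.one_mem))
  · exact Set.mul_subset_mul (Set.mul_subset_mul_right (Set.singleton_subset_iff.2
      (Set.inv_mem_inv.2 haS))) (Set.singleton_subset_iff.2 haS)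

theorem stmt4 {G : Type*} [Group G] (S : Set G) (hS : S.Finite) (h1 : (1 : G) ∈ S)
    (hgen : Subgroup.closure S = ⊤) (H : Subgroup G) (hHfin : (H : Set G).Finite)
    (hprop : H ≠ ⊤)
    (hcard : ((H : Set G) * S).ncard + 1 ≤ (H : Set G).ncard + S.ncard) :
    ∃ a ∈ S, S⁻¹ * (H : Set G) * S = S⁻¹ * S ∪ {a⁻¹} * (H : Set G) * {a} :=
  stmt4_general S hS h1 H hHfin hcard
end

section
/- Let G be a group, S ⊆ G finite with 1 ∈ S, H ≤ G a finite subgroup, and write S = S₁ ∪ ... ∪ S_k where each Sᵢ is the (nonempty) intersection of S with a right coset of H, with |S₁| ≤ ... ≤ |S_k| and k ≥ 2. If |HS| - |S| ≤ |H| - 1, then |S₁| + |S₂| ≥ |H| + 1, and consequently Sᵢ⁻¹Sⱼ = Sᵢ⁻¹HSⱼ for every pair (i,j) ≠ (1,1). -/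
open Pointwise

lemma ncard_iUnion_fin {α : Type*} : ∀ {n : ℕ} (f : Fin n → Set α),
    (∀ i, (f i).Finite) → (∀ i j, i ≠ j → Disjoint (f i) (f j)) →
    (⋃ i, f i).ncard = ∑ i, (f i).ncard := by
  intro n
  induction n with
  | zero => intro f _ _; simp
  | succ n ih =>
    intro f hfin hdisj
    have hsplit : (⋃ i, f i) = f 0 ∪ ⋃ i : Fin n, f i.succ := by
      ext x
      simp only [Set.mem_iUnion, Set.mem_union]
      constructor
      · rintro ⟨i, hi⟩
        rcases Fin.eq_zero_or_eq_succ i with h | ⟨j, rfl⟩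
        · left; rwa [h] at hi
        · right; exact ⟨j, hi⟩
      · rintro (h | ⟨j, hj⟩)
        · exact ⟨0, h⟩
        · exact ⟨j.succ, hj⟩
    rw [hsplit, Set.ncard_union_eq (Set.disjoint_iUnion_right.2 fun i => hdisj _ _ (Fin.succ_ne_zero i).symm) (hfin 0) (Set.finite_iUnion (fun i : Fin n => hfin i.succ)),
      ih (fun i => f i.succ) (fun i => hfin _)
      (fun i j hij => hdisj _ _ (by simpa using hij)), Fin.sum_univ_succ]

lemma key_pair {G : Type*} [Group G] (H : Subgroup G) (hHfin : (H : Set G).Finite)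
    (A B : Set G) (hA : A ⊆ (H : Set G)) (hB : B ⊆ (H : Set G))
    (hcard : (H : Set G).ncard + 1 ≤ A.ncard + B.ncard) :
    ∀ h ∈ H, ∃ a ∈ A, ∃ b ∈ B, a⁻¹ * b = h := by
  intro h hh
  set C : Set G := (fun x => x * h⁻¹) '' B with hC
  have hCcard : C.ncard = B.ncard :=
    Set.ncard_image_of_injective _ (mul_left_injective h⁻¹)
  have hCsub : C ⊆ (H : Set G) := by
    rintro x ⟨b, hb, rfl⟩
    exact H.mul_mem (hB hb) (H.inv_mem hh)
  have hAfin : A.Finite := hHfin.subset hA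
  have hCfin : C.Finite := hHfin.subset hCsub
  have hunion : (A ∪ C).ncard ≤ (H : Set G).ncard :=
    Set.ncard_le_ncard (Set.union_subset hA hCsub) hHfin
  have hsum := Set.ncard_inter_add_ncard_union A C hAfin hCfin
  have hne : (A ∩ C).Nonempty := by
    rw [Set.nonempty_iff_ne_empty]
    intro hemp
    rw [hemp, Set.ncard_empty] at hsum
    omega
  obtain ⟨x, hxA, hxC⟩ := hne
  obtain ⟨b, hb, rfl⟩ := hxC
  exact ⟨b * h⁻¹, hxA, b, hb, by group⟩

theorem stmt5 {G : Type*} [Group G] (H : Subgroup G) (hHfin : (H : Set G).Finite)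
    (S : Set G) (hS : S.Finite) (k : ℕ) (hk : 2 ≤ k)
    (Si : Fin k → Set G) (a : Fin k → G)
    (hSi : ∀ i, Si i = S ∩ ((H : Set G) * {a i}))
    (hne : ∀ i, (Si i).Nonempty)
    (hdisj : ∀ i j, i ≠ j → Disjoint (Si i) (Si j))
    (hcover : S = ⋃ i, Si i)
    (hmono : ∀ i j : Fin k, i ≤ j → (Si i).ncard ≤ (Si j).ncard)
    (hcard : ((H : Set G) * S).ncard + 1 ≤ S.ncard + (H : Set G).ncard) :
    (H : Set G).ncard + 1 ≤ (Si ⟨0, by omega⟩).ncard + (Si ⟨1, by omega⟩).ncard ∧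
      ∀ i j : Fin k, ¬(i = ⟨0, by omega⟩ ∧ j = ⟨0, by omega⟩) →
        (Si i)⁻¹ * (Si j) = (Si i)⁻¹ * (H : Set G) * (Si j) := by
  set i0 : Fin k := ⟨0, by omega⟩ with hi0
  set i1 : Fin k := ⟨1, by omega⟩ with hi1
  have hi01 : i0 ≠ i1 := by simp [hi0, hi1, Fin.ext_iff]
  have hSisub : ∀ i, Si i ⊆ (H : Set G) * {a i} := fun i => by
    rw [hSi i]; exact Set.inter_subset_right
  have hSifin : ∀ i, (Si i).Finite := fun i =>
    hS.subset (by rw [hSi i]; exact Set.inter_subset_left)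
  have hmem_coset : ∀ (i : Fin k) (x : G), x ∈ (H : Set G) * {a i} ↔ ∃ h ∈ H, h * a i = x := by
    intro i x
    rw [Set.mem_mul]
    constructor
    · rintro ⟨h, hh, y, hy, rfl⟩
      rw [Set.mem_singleton_iff] at hy
      subst hy
      exact ⟨h, hh, rfl⟩
    · rintro ⟨h, hh, rfl⟩
      exact ⟨h, hh, a i, rfl, rfl⟩
  have hcoset_card : ∀ i, ((H : Set G) * {a i}).ncard = (H : Set G).ncard := by
    intro i
    rw [Set.mul_singleton]
    exact Set.ncard_image_of_injective _ (mul_left_injective (a i))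
  have hcoset_fin : ∀ i, ((H : Set G) * {a i}).Finite := by
    intro i
    rw [Set.mul_singleton]
    exact hHfin.image _
  have hcoset_disj : ∀ i j : Fin k, i ≠ j →
      Disjoint ((H : Set G) * {a i}) ((H : Set G) * {a j}) := by
    intro i j hij
    rw [Set.disjoint_left]
    intro x hxi hxj
    obtain ⟨h1, hh1, he1⟩ := (hmem_coset i x).1 hxi
    obtain ⟨h2, hh2, he2⟩ := (hmem_coset j x).1 hxj
    have hai : a i = h1⁻¹ * (h2 * a j) := by rw [he2, ← he1]; group
    have hcoseteq : (H : Set G) * {a i} = (H : Set G) * {a j} := by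
      ext y
      rw [hmem_coset, hmem_coset]
      constructor
      · rintro ⟨h3, hh3, rfl⟩
        exact ⟨h3 * h1⁻¹ * h2, H.mul_mem (H.mul_mem hh3 (H.inv_mem hh1)) hh2,
          by rw [hai]; group⟩
      · rintro ⟨h3, hh3, rfl⟩
        exact ⟨h3 * h2⁻¹ * h1, H.mul_mem (H.mul_mem hh3 (H.inv_mem hh2)) hh1,
          by rw [hai]; group⟩
    have hSiSj : Si i = Si j := by rw [hSi, hSi, hcoseteq]
    obtain ⟨s, hs⟩ := hne i
    exact absurd (hSiSj ▸ hs) (Set.disjoint_left.1 (hdisj i j hij) hs)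
  have hmemS : ∀ (i : Fin k) {s : G}, s ∈ Si i → s ∈ S := by
    intro i s hs
    rw [hSi i] at hs
    exact hs.1
  have hHS : (H : Set G) * S = ⋃ i, (H : Set G) * {a i} := by
    ext x
    rw [Set.mem_iUnion, Set.mem_mul]
    constructor
    · rintro ⟨h, hh, s, hs, rfl⟩
      rw [hcover, Set.mem_iUnion] at hs
      obtain ⟨i, hsi⟩ := hs
      obtain ⟨h', hh', he⟩ := (hmem_coset i s).1 (hSisub i hsi)
      exact ⟨i, (hmem_coset i _).2 ⟨h * h', H.mul_mem hh hh',
        by rw [mul_assoc, he]⟩⟩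
    · rintro ⟨i, hx⟩
      obtain ⟨h, hh, rfl⟩ := (hmem_coset i x).1 hx
      obtain ⟨s, hs⟩ := hne i
      obtain ⟨h', hh', he⟩ := (hmem_coset i s).1 (hSisub i hs)
      exact ⟨h * h'⁻¹, H.mul_mem hh (H.inv_mem hh'), s, hmemS i hs,
        by rw [← he]; group⟩
  have hHScard : ((H : Set G) * S).ncard = k * (H : Set G).ncard := by
    have hsc : ∑ i : Fin k, ((H : Set G) * {a i}).ncard
        = ∑ _i : Fin k, (H : Set G).ncard :=
      Finset.sum_congr rfl (fun i _ => hcoset_card i)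
    rw [hHS, ncard_iUnion_fin _ hcoset_fin hcoset_disj, hsc, Finset.sum_const,
      Finset.card_univ, Fintype.card_fin, smul_eq_mul]
  have hScard : S.ncard = ∑ i, (Si i).ncard := by
    rw [hcover, ncard_iUnion_fin _ hSifin hdisj]
  have hSile : ∀ i, (Si i).ncard ≤ (H : Set G).ncard := fun i => by
    rw [← hcoset_card i]; exact Set.ncard_le_ncard (hSisub i) (hcoset_fin i)
  have hpairsub : ({i0, i1} : Finset (Fin k)) ⊆ Finset.univ := Finset.subset_univ _
  have hsplit := Finset.sum_sdiff (f := fun i => (Si i).ncard) hpairsub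
  have hpairsum : ∑ i ∈ ({i0, i1} : Finset (Fin k)), (Si i).ncard
      = (Si i0).ncard + (Si i1).ncard := Finset.sum_pair hi01
  have hsdiffcard : (Finset.univ \ ({i0, i1} : Finset (Fin k))).card = k - 2 := by
    rw [Finset.card_sdiff_of_subset hpairsub]
    simp [Finset.card_pair hi01]
  have hsdiffle : ∑ i ∈ Finset.univ \ ({i0, i1} : Finset (Fin k)), (Si i).ncard
      ≤ (k - 2) * (H : Set G).ncard := by
    calc ∑ i ∈ Finset.univ \ ({i0, i1} : Finset (Fin k)), (Si i).ncard
        ≤ ∑ _i ∈ Finset.univ \ ({i0, i1} : Finset (Fin k)), (H : Set G).ncard :=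
          Finset.sum_le_sum (fun i _ => hSile i)
      _ = (k - 2) * (H : Set G).ncard := by
          rw [Finset.sum_const, hsdiffcard, smul_eq_mul]
  have h3 : (k - 2) * (H : Set G).ncard + 2 * (H : Set G).ncard
      = k * (H : Set G).ncard := by
    rw [← add_mul]
    congr 1
    omega
  have part1 : (H : Set G).ncard + 1 ≤ (Si i0).ncard + (Si i1).ncard := by
    have h1 : k * (H : Set G).ncard + 1 ≤ (∑ i, (Si i).ncard) + (H : Set G).ncard := by
      rw [← hScard, ← hHScard]; exact hcard
    have h2 : (∑ i ∈ Finset.univ \ ({i0, i1} : Finset (Fin k)), (Si i).ncard)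
        + ((Si i0).ncard + (Si i1).ncard) = ∑ i, (Si i).ncard := by
      rw [← hpairsum]; exact hsplit
    linarith
  refine ⟨part1, ?_⟩
  intro i j hij
  have hle0 : ∀ m : Fin k, i0 ≤ m := fun m => by
    rw [Fin.le_def]; exact Nat.zero_le _
  have hcij : (H : Set G).ncard + 1 ≤ (Si i).ncard + (Si j).ncard := by
    rcases eq_or_ne j i0 with rfl | hj
    · have hi : i ≠ i0 := fun h => hij ⟨h, rfl⟩
      have h1i : i1 ≤ i := by
        rw [Fin.le_def]
        have : i.val ≠ 0 := fun h => hi (Fin.ext h)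
        simp only [hi1]
        omega
      linarith [part1, hmono i1 i h1i]
    · have h1j : i1 ≤ j := by
        rw [Fin.le_def]
        have : j.val ≠ 0 := fun h => hj (Fin.ext h)
        simp only [hi1]
        omega
      linarith [part1, hmono i0 i (hle0 i), hmono i1 j h1j]
  have hAsub : ((fun x => x * (a i)⁻¹) '' Si i) ⊆ (H : Set G) := by
    rintro _ ⟨s, hs, rfl⟩
    obtain ⟨h, hh, he⟩ := (hmem_coset i s).1 (hSisub i hs)
    show s * (a i)⁻¹ ∈ (H : Set G)
    have heq : s * (a i)⁻¹ = h := by rw [← he]; group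
    rw [heq]; exact hh
  have hBsub : ((fun x => x * (a j)⁻¹) '' Si j) ⊆ (H : Set G) := by
    rintro _ ⟨s, hs, rfl⟩
    obtain ⟨h, hh, he⟩ := (hmem_coset j s).1 (hSisub j hs)
    show s * (a j)⁻¹ ∈ (H : Set G)
    have heq : s * (a j)⁻¹ = h := by rw [← he]; group
    rw [heq]; exact hh
  have hAcard : ((fun x => x * (a i)⁻¹) '' Si i).ncard = (Si i).ncard :=
    Set.ncard_image_of_injective _ (mul_left_injective (a i)⁻¹)
  have hBcard : ((fun x => x * (a j)⁻¹) '' Si j).ncard = (Si j).ncard :=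
    Set.ncard_image_of_injective _ (mul_left_injective (a j)⁻¹)
  have key := key_pair H hHfin _ _ hAsub hBsub (by rw [hAcard, hBcard]; exact hcij)
  ext x
  constructor
  · intro hx
    rw [Set.mem_mul] at hx
    obtain ⟨u, hu, t, ht, rfl⟩ := hx
    have heq : u * t = u * 1 * t := by group
    rw [heq]
    exact Set.mul_mem_mul (Set.mul_mem_mul hu H.one_mem) ht
  · intro hx
    rw [Set.mem_mul] at hx
    obtain ⟨y, hy, t, ht, rfl⟩ := hx
    rw [Set.mem_mul] at hy
    obtain ⟨u, hu, h, hh, rfl⟩ := hy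
    have hsmem : u⁻¹ ∈ Si i := Set.mem_inv.1 hu
    obtain ⟨hs', hhs', hes⟩ := (hmem_coset i u⁻¹).1 (hSisub i hsmem)
    obtain ⟨ht', hht', het⟩ := (hmem_coset j t).1 (hSisub j ht)
    have hu2 : u = (hs' * a i)⁻¹ := by rw [hes, inv_inv]
    have h0mem : a i * (u * h * t) * (a j)⁻¹ ∈ H := by
      have heq : a i * (u * h * t) * (a j)⁻¹ = hs'⁻¹ * h * ht' := by
        rw [hu2, ← het]; group
      rw [heq]
      exact H.mul_mem (H.mul_mem (H.inv_mem hhs') hh) hht'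
    obtain ⟨α, hα, β, hβ, hαβ⟩ := key _ h0mem
    obtain ⟨s', hs'mem, hs'eq⟩ := hα
    obtain ⟨t', ht'mem, ht'eq⟩ := hβ
    have hs'eq2 : s' * (a i)⁻¹ = α := hs'eq
    have ht'eq2 : t' * (a j)⁻¹ = β := ht'eq
    rw [← hs'eq2, ← ht'eq2] at hαβ
    have hxeq : u * h * t = s'⁻¹ * t' := by
      calc u * h * t = (a i)⁻¹ * (a i * (u * h * t) * (a j)⁻¹) * a j := by group
        _ = (a i)⁻¹ * ((s' * (a i)⁻¹)⁻¹ * (t' * (a j)⁻¹)) * a j := by rw [hαβ]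
        _ = s'⁻¹ * t' := by group
    rw [hxeq]
    exact Set.mul_mem_mul (Set.inv_mem_inv.2 hs'mem) ht'mem
end

section
/- Let Γ = (V,E) be a reflexive relation on a set V, let k ≥ 1, and suppose X is a k-fragment: X is finite, |X| ≥ k, |V \ Γ(X)| ≥ k, and |∂(X)| = κ_k where κ_k is the minimum of |∂(Y)| over all finite Y with |Y| ≥ k and |V \ Γ(Y)| ≥ k. Then ∂⁻(∇(X)) = ∂(X) and ∇⁻(∇(X)) = X, where ∇(X) = V \ Γ(X), ∂⁻ and ∇⁻ are taken with respect to the reverse relation. -/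
variable {V : Type*}

/-- Image of a set under a relation. -/
def GImg (E : V → V → Prop) (X : Set V) : Set V := {y | ∃ x ∈ X, E x y}

/-- Board (boundary) of a set. -/
def GBd (E : V → V → Prop) (X : Set V) : Set V := GImg E X \ X

/-- Exterior of a set. -/
def GExt (E : V → V → Prop) (X : Set V) : Set V := (GImg E X)ᶜ

/-- Reverse relation. -/
def GRev (E : V → V → Prop) : V → V → Prop := fun x y => E y x

/-- Reflexivity. -/
def GRefl (E : V → V → Prop) : Prop := ∀ x, E x x

/-- Local finiteness. -/
def GLocFin (E : V → V → Prop) : Prop :=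
  ∀ x : V, {y | E x y}.Finite ∧ {y | E y x}.Finite

/-- k-separability. -/
def GSep (E : V → V → Prop) (k : ℕ) : Prop :=
  ∃ X : Set V, X.Finite ∧ k ≤ X.ncard ∧ k ≤ (GExt E X).ncard

/-- The k-th connectivity. -/
noncomputable def GKappa (E : V → V → Prop) (k : ℕ) : ℕ :=
  sInf {n | ∃ X : Set V, X.Finite ∧ k ≤ X.ncard ∧ k ≤ (GExt E X).ncard ∧ (GBd E X).ncard = n}

/-- k-fragments. -/
def GFrag (E : V → V → Prop) (k : ℕ) (X : Set V) : Prop :=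
  X.Finite ∧ k ≤ X.ncard ∧ k ≤ (GExt E X).ncard ∧ (GBd E X).ncard = GKappa E k

/-- k-atoms: k-fragments of minimal cardinality. -/
def GAtom (E : V → V → Prop) (k : ℕ) (X : Set V) : Prop :=
  GFrag E k X ∧ ∀ Y : Set V, GFrag E k Y → X.ncard ≤ Y.ncard

/-- k-faithful: every k-atom A satisfies |A| ≤ |∇(A)|. -/
def GFaithful (E : V → V → Prop) (k : ℕ) : Prop :=
  ∀ A : Set V, GAtom E k A → A.ncard ≤ (GExt E A).ncard

theorem stmt7 {V : Type*} (E : V → V → Prop) (hrefl : GRefl E) (hloc : GLocFin E)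
    (k : ℕ) (hk : 1 ≤ k) (hsep : GSep E k) (X : Set V) (hX : GFrag E k X) :
    GBd (GRev E) (GExt E X) = GBd E X ∧ GExt (GRev E) (GExt E X) = X := by
  obtain ⟨hXfin, hXk, hExtk, hbd⟩ := hX
  have hImgXfin : (GImg E X).Finite := by
    have hsub : GImg E X ⊆ ⋃ x ∈ X, {y | E x y} := by
      rintro w ⟨x, hx, hE⟩
      exact Set.mem_biUnion hx hE
    exact (hXfin.biUnion (fun x _ => (hloc x).1)).subset hsub
  have hExtfin : (GExt E X).Finite := by
    by_contra h
    rw [Set.Infinite.ncard h] at hExtk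
    omega
  have hVfin : Finite V := by
    have : (Set.univ : Set V).Finite := by
      rw [← Set.union_compl_self (GImg E X)]
      exact hImgXfin.union hExtfin
    exact Set.finite_univ_iff.mp this
  set Z : Set V := GExt (GRev E) (GExt E X) with hZdef
  have hXZ : X ⊆ Z := by
    rintro x hx ⟨w, hw, hE⟩
    exact hw ⟨x, hx, hE⟩
  have hZΓ : Z ⊆ GImg E X := by
    intro z hz
    by_contra hc
    exact hz ⟨z, hc, hrefl z⟩
  have hΓZ : GImg E Z ⊆ GImg E X := by
    rintro w ⟨z, hz, hE⟩
    by_contra hc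
    exact hz ⟨w, hc, hE⟩
  -- Z is a competitor
  have hκle : GKappa E k ≤ (GBd E Z).ncard := by
    apply Nat.sInf_le
    refine ⟨Z, Z.toFinite, le_trans hXk (Set.ncard_le_ncard hXZ Z.toFinite), ?_, rfl⟩
    exact le_trans hExtk (Set.ncard_le_ncard (Set.compl_subset_compl.mpr hΓZ)
      (GExt E Z).toFinite)
  -- GBd E Z and Z \ X are disjoint subsets of GBd E X
  have hsub1 : GBd E Z ∪ (Z \ X) ⊆ GBd E X := by
    rintro w (⟨hw1, hw2⟩ | ⟨hw1, hw2⟩)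
    · exact ⟨hΓZ hw1, fun hx => hw2 (hXZ hx)⟩
    · exact ⟨hZΓ hw1, hw2⟩
  have hdisj : Disjoint (GBd E Z) (Z \ X) := by
    rw [Set.disjoint_left]
    rintro w ⟨_, hw2⟩ ⟨hw3, _⟩
    exact hw2 hw3
  have hcard : (GBd E Z).ncard + (Z \ X).ncard ≤ (GBd E X).ncard := by
    rw [← Set.ncard_union_eq hdisj (GBd E Z).toFinite (Z \ X).toFinite]
    exact Set.ncard_le_ncard hsub1 (GBd E X).toFinite
  rw [hbd] at hcard
  have hZX0 : (Z \ X).ncard = 0 := by omega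
  have hZXe : Z \ X = ∅ := by
    rwa [Set.ncard_eq_zero (Z \ X).toFinite] at hZX0
  have hZX : Z = X := Set.Subset.antisymm (Set.diff_eq_empty.mp hZXe) hXZ
  constructor
  · -- GBd (GRev E) (GExt E X) = GBd E X
    have hI : GImg (GRev E) (GExt E X) = Xᶜ := by
      have : Z = Xᶜᶜ := by rw [hZX, compl_compl]
      have h2 : (GImg (GRev E) (GExt E X))ᶜ = Xᶜᶜ := this
      have := congrArg compl h2
      simpa using this
    show GImg (GRev E) (GExt E X) \ GExt E X = GBd E X
    rw [hI]
    ext w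
    simp only [GBd, GExt, Set.mem_diff, Set.mem_compl_iff, not_not]
    tauto
  · exact hZX
end

section
/- Let Γ = (V,E) be a reflexive relation on a finite set V which is k-separable. Then κ_k(Γ) = κ_k(Γ⁻), where Γ⁻ is the reverse relation. -/
variable {V : Type*}

lemma ext_rev_ext {V : Type*} (E : V → V → Prop) (X : Set V) :
    X ⊆ GExt (GRev E) (GExt E X) := by
  intro x hx hmem
  obtain ⟨y, hy, hxy⟩ := hmem
  exact hy ⟨x, hx, hxy⟩

lemma bd_rev_ext {V : Type*} (E : V → V → Prop) (X : Set V) :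
    GBd (GRev E) (GExt E X) ⊆ GBd E X := by
  rintro z ⟨⟨y, hy, hzy⟩, hzY⟩
  refine ⟨not_not.mp hzY, fun hz => hy ⟨z, hz, hzy⟩⟩

lemma sep_rev {V : Type*} [Finite V] (E : V → V → Prop) (k : ℕ)
    (hsep : GSep E k) : GSep (GRev E) k := by
  obtain ⟨X, hfin, h1, h2⟩ := hsep
  exact ⟨GExt E X, Set.toFinite _, h2,
    le_trans h1 (Set.ncard_le_ncard (ext_rev_ext E X) (Set.toFinite _))⟩

lemma kappa_rev_le {V : Type*} [Finite V] (E : V → V → Prop) (k : ℕ)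
    (hsep : GSep E k) : GKappa (GRev E) k ≤ GKappa E k := by
  obtain ⟨X0, hfin0, h10, h20⟩ := hsep
  have hne : {n | ∃ X : Set V, X.Finite ∧ k ≤ X.ncard ∧ k ≤ (GExt E X).ncard ∧
      (GBd E X).ncard = n}.Nonempty := ⟨_, X0, hfin0, h10, h20, rfl⟩
  obtain ⟨X, hXfin, hX1, hX2, hX3⟩ := Nat.sInf_mem hne
  calc GKappa (GRev E) k ≤ (GBd (GRev E) (GExt E X)).ncard :=
        Nat.sInf_le ⟨GExt E X, Set.toFinite _, hX2,
          le_trans hX1 (Set.ncard_le_ncard (ext_rev_ext E X) (Set.toFinite _)), rfl⟩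
    _ ≤ (GBd E X).ncard := Set.ncard_le_ncard (bd_rev_ext E X) (Set.toFinite _)
    _ = GKappa E k := hX3

theorem stmt9 {V : Type*} [Finite V] (E : V → V → Prop) (hrefl : GRefl E)
    (k : ℕ) (hk : 1 ≤ k) (hsep : GSep E k) :
    GKappa E k = GKappa (GRev E) k :=
  le_antisymm (kappa_rev_le (GRev E) k (sep_rev E k hsep)) (kappa_rev_le E k hsep)
end

section
/- Let Γ = (V,E) be a reflexive locally finite k-separable relation and let A be a k-atom (a k-fragment of minimum cardinality) with |A| > k. Then for every x ∈ A, the set Γ⁻(x) ∩ A contains an element other than x, i.e., some other element of A maps to x under Γ. -/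
variable {V : Type*}

/-! Removing from a k-atom `A` a point `x` that has no in-neighbour in `A` other than itself does
not enlarge the boundary, since `x` is then not reached from `A \ {x}`, and can only shrink the
exterior by out-neighbours of `x`. So `A \ {x}` would again be a k-fragment, smaller than `A`. -/

section

variable (E : V → V → Prop)

theorem GImg_mono {X Y : Set V} (h : X ⊆ Y) : GImg E X ⊆ GImg E Y := by
  rintro y ⟨z, hz, hzy⟩
  exact ⟨z, h hz, hzy⟩

theorem GImg_finite (hout : ∀ x, {y | E x y}.Finite) {X : Set V} (hX : X.Finite) :
    (GImg E X).Finite := by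
  refine (hX.biUnion fun z _ => hout z).subset ?_
  rintro y ⟨z, hz, hzy⟩
  exact Set.mem_biUnion hz hzy

theorem GExt_diff_singleton_subset (X : Set V) (x : V) :
    GExt E (X \ {x}) ⊆ GExt E X ∪ {y | E x y} := by
  intro y hy
  by_cases hyExt : y ∈ GExt E X
  · exact Or.inl hyExt
  obtain ⟨z, hzX, hzy⟩ := not_not.mp hyExt
  obtain rfl | hzx := eq_or_ne z x
  · exact Or.inr hzy
  · exact (hy ⟨z, ⟨hzX, hzx⟩, hzy⟩).elim

theorem GExt_ncard_le_diff_singleton (hout : ∀ x, {y | E x y}.Finite) (X : Set V) (x : V) :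
    (GExt E X).ncard ≤ (GExt E (X \ {x})).ncard := by
  have hsub : GExt E X ⊆ GExt E (X \ {x}) := fun y hy h => hy (GImg_mono E Set.sdiff_subset h)
  by_cases hfin : (GExt E (X \ {x})).Finite
  · exact Set.ncard_le_ncard hsub hfin
  · -- both exteriors are infinite, as they differ by finitely many out-neighbours of `x`
    have hinf : (GExt E X).Infinite := fun h =>
      hfin ((h.union (hout x)).subset (GExt_diff_singleton_subset E X x))
    rw [hinf.ncard]
    exact Nat.zero_le _

theorem GBd_diff_singleton_subset {X : Set V} {x : V} (hin : ∀ y ∈ X, y ≠ x → ¬E y x) :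
    GBd E (X \ {x}) ⊆ GBd E X := by
  rintro z ⟨hzImg, hzX'⟩
  refine ⟨GImg_mono E Set.sdiff_subset hzImg, fun hzX => ?_⟩
  obtain rfl | hzx := eq_or_ne z x
  · obtain ⟨y, ⟨hyX, hyz⟩, hEyz⟩ := hzImg
    exact hin y hyX hyz hEyz
  · exact hzX' ⟨hzX, hzx⟩

theorem GKappa_le_ncard_GBd {k : ℕ} {X : Set V} (hX : X.Finite) (hkX : k ≤ X.ncard)
    (hkExt : k ≤ (GExt E X).ncard) : GKappa E k ≤ (GBd E X).ncard :=
  Nat.sInf_le ⟨X, hX, hkX, hkExt, rfl⟩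

theorem GFrag.diff_singleton (hout : ∀ x, {y | E x y}.Finite) {k : ℕ} {X : Set V}
    (hX : GFrag E k X) (hbig : k < X.ncard) {x : V} (hx : x ∈ X)
    (hin : ∀ y ∈ X, y ≠ x → ¬E y x) : GFrag E k (X \ {x}) := by
  obtain ⟨hfin, -, hkExt, hbd⟩ := hX
  have hfin' : (X \ {x}).Finite := hfin.sdiff
  have hkX' : k ≤ (X \ {x}).ncard := by
    rw [Set.ncard_sdiff_singleton_of_mem hx]
    omega
  have hkExt' : k ≤ (GExt E (X \ {x})).ncard :=
    hkExt.trans (GExt_ncard_le_diff_singleton E hout X x)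
  have hbd_le : (GBd E (X \ {x})).ncard ≤ GKappa E k :=
    hbd ▸ Set.ncard_le_ncard (GBd_diff_singleton_subset E hin) (GImg_finite E hout hfin).sdiff
  exact ⟨hfin', hkX', hkExt', hbd_le.antisymm (GKappa_le_ncard_GBd E hfin' hkX' hkExt')⟩

end

theorem stmt11_general {V : Type*} (E : V → V → Prop) (hloc : GLocFin E)
    (k : ℕ) (A : Set V) (hA : GAtom E k A)
    (hbig : k < A.ncard) :
    ∀ x ∈ A, ∃ y ∈ A, y ≠ x ∧ E y x := by
  intro x hx
  by_contra! hin
  have hmin := hA.2 _ (hA.1.diff_singleton E (fun x => (hloc x).1) hbig hx hin)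
  rw [Set.ncard_sdiff_singleton_of_mem hx] at hmin
  omega

theorem stmt11 {V : Type*} (E : V → V → Prop) (hrefl : GRefl E) (hloc : GLocFin E)
    (k : ℕ) (hk : 1 ≤ k) (hsep : GSep E k) (A : Set V) (hA : GAtom E k A)
    (hbig : k < A.ncard) :
    ∀ x ∈ A, ∃ y ∈ A, y ≠ x ∧ E y x :=
  stmt11_general E hloc k A hA hbig
end

section
/- Let Γ = (V,E) be a reflexive locally finite k-separable relation, X a k-fragment, and Y a k-fragment with |X ∩ Y| ≥ k. Then |∇(Y) ∩ ∂(X)| ≤ |X ∩ ∂(Y)|. -/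
variable {V : Type*}

theorem stmt12 {V : Type*} (E : V → V → Prop) (hrefl : GRefl E) (hloc : GLocFin E)
    (k : ℕ) (hk : 1 ≤ k) (hsep : GSep E k) (X Y : Set V)
    (hX : GFrag E k X) (hY : GFrag E k Y) (hXY : k ≤ (X ∩ Y).ncard) :
    (GExt E Y ∩ GBd E X).ncard ≤ (X ∩ GBd E Y).ncard := by
  obtain ⟨hXfin, hXk, hXe, hXb⟩ := hX
  obtain ⟨hYfin, hYk, hYe, hYb⟩ := hY
  -- Γ(X) is finite
  have hΓX : (GImg E X).Finite := by
    have hsub : GImg E X ⊆ ⋃ x ∈ X, {y | E x y} := by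
      rintro z ⟨x, hx, hE⟩; exact Set.mem_biUnion hx hE
    exact (Set.Finite.biUnion hXfin (fun x _ => (hloc x).1)).subset hsub
  -- V is finite
  have hV : (Set.univ : Set V).Finite := by
    by_contra h
    haveI : Infinite V := Set.infinite_univ_iff.mp h
    have hinf : (GImg E X)ᶜ.Infinite := hΓX.infinite_compl
    have : (GExt E X).ncard = 0 := Set.Infinite.ncard hinf
    rw [this] at hXe; omega
  have fin : ∀ S : Set V, S.Finite := fun S => hV.subset (Set.subset_univ S)
  -- κ ≤ |∂(X ∩ Y)|
  have hκle : GKappa E k ≤ (GBd E (X ∩ Y)).ncard := by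
    apply Nat.sInf_le
    refine ⟨X ∩ Y, fin _, hXY, ?_, rfl⟩
    have hmono : GExt E X ⊆ GExt E (X ∩ Y) := by
      intro z hz hmem
      obtain ⟨x, ⟨hx, _⟩, hE⟩ := hmem
      exact hz ⟨x, hx, hE⟩
    exact le_trans hXe (Set.ncard_le_ncard hmono (fin _))
  -- boundary decomposition
  have hsub : GBd E (X ∩ Y) ⊆
      (X ∩ GBd E Y) ∪ ((GBd E X ∩ Y) ∪ (GBd E X ∩ GBd E Y)) := by
    rintro z ⟨⟨x, ⟨hxX, hxY⟩, hE⟩, hz⟩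
    have hzΓX : z ∈ GImg E X := ⟨x, hxX, hE⟩
    have hzΓY : z ∈ GImg E Y := ⟨x, hxY, hE⟩
    by_cases hX' : z ∈ X
    · by_cases hY' : z ∈ Y
      · exact absurd ⟨hX', hY'⟩ hz
      · exact Or.inl ⟨hX', hzΓY, hY'⟩
    · by_cases hY' : z ∈ Y
      · exact Or.inr (Or.inl ⟨⟨hzΓX, hX'⟩, hY'⟩)
      · exact Or.inr (Or.inr ⟨⟨hzΓX, hX'⟩, hzΓY, hY'⟩)
  -- partition of ∂X
  have hpart : GBd E X =
      ((GBd E X ∩ Y) ∪ (GBd E X ∩ GBd E Y)) ∪ (GBd E X ∩ GExt E Y) := by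
    ext z
    constructor
    · intro hz
      by_cases hΓ : z ∈ GImg E Y
      · by_cases hY' : z ∈ Y
        · exact Or.inl (Or.inl ⟨hz, hY'⟩)
        · exact Or.inl (Or.inr ⟨hz, hΓ, hY'⟩)
      · exact Or.inr ⟨hz, hΓ⟩
    · rintro ((⟨h, _⟩ | ⟨h, _⟩) | ⟨h, _⟩) <;> exact h
  have d1 : Disjoint (GBd E X ∩ Y) (GBd E X ∩ GBd E Y) := by
    rw [Set.disjoint_left]
    rintro z ⟨_, hzY⟩ ⟨_, _, hzY'⟩
    exact hzY' hzY
  have d2 : Disjoint ((GBd E X ∩ Y) ∪ (GBd E X ∩ GBd E Y)) (GBd E X ∩ GExt E Y) := by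
    rw [Set.disjoint_left]
    rintro z (⟨_, hzY⟩ | ⟨_, hzY, _⟩) ⟨_, hext⟩
    · exact hext ⟨z, hzY, hrefl z⟩
    · exact hext hzY
  have heq : (GBd E X).ncard =
      ((GBd E X ∩ Y).ncard + (GBd E X ∩ GBd E Y).ncard) + (GBd E X ∩ GExt E Y).ncard := by
    conv_lhs => rw [hpart]
    rw [Set.ncard_union_eq d2 (fin _) (fin _), Set.ncard_union_eq d1 (fin _) (fin _)]
  have hle2 : (GBd E (X ∩ Y)).ncard ≤
      (X ∩ GBd E Y).ncard + ((GBd E X ∩ Y).ncard + (GBd E X ∩ GBd E Y).ncard) := by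
    calc (GBd E (X ∩ Y)).ncard
        ≤ ((X ∩ GBd E Y) ∪ ((GBd E X ∩ Y) ∪ (GBd E X ∩ GBd E Y))).ncard :=
          Set.ncard_le_ncard hsub (fin _)
      _ ≤ (X ∩ GBd E Y).ncard + ((GBd E X ∩ Y) ∪ (GBd E X ∩ GBd E Y)).ncard :=
          Set.ncard_union_le _ _
      _ ≤ (X ∩ GBd E Y).ncard + ((GBd E X ∩ Y).ncard + (GBd E X ∩ GBd E Y).ncard) :=
          Nat.add_le_add_left (Set.ncard_union_le _ _) _
  rw [Set.inter_comm]
  omega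
end

section
/- Let Γ = (V,E) be a reflexive locally finite k-separable relation and let X, Y be k-fragments with |X ∩ Y| ≥ k and |∇(X) ∩ ∇(Y)| ≥ k. Then X ∩ Y is a k-fragment. -/
variable {V : Type*}

lemma gimg_finite {E : V → V → Prop} (hloc : GLocFin E) {X : Set V} (hX : X.Finite) :
    (GImg E X).Finite := by
  have h : GImg E X = ⋃ x ∈ X, {y | E x y} := by
    ext y; simp [GImg]
  rw [h]
  exact hX.biUnion (fun x _ => (hloc x).1)

lemma gsubset_img {E : V → V → Prop} (hrefl : GRefl E) (X : Set V) : X ⊆ GImg E X :=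
  fun x hx => ⟨x, hx, hrefl x⟩

lemma gimg_mono {E : V → V → Prop} {X Y : Set V} (h : X ⊆ Y) : GImg E X ⊆ GImg E Y :=
  fun y ⟨x, hx, hxy⟩ => ⟨x, h hx, hxy⟩

lemma gimg_union {E : V → V → Prop} (X Y : Set V) :
    GImg E (X ∪ Y) = GImg E X ∪ GImg E Y := by
  ext y
  constructor
  · rintro ⟨x, hx | hx, hxy⟩
    · exact Or.inl ⟨x, hx, hxy⟩
    · exact Or.inr ⟨x, hx, hxy⟩
  · rintro (⟨x, hx, hxy⟩ | ⟨x, hx, hxy⟩)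
    · exact ⟨x, Or.inl hx, hxy⟩
    · exact ⟨x, Or.inr hx, hxy⟩

theorem stmt13 {V : Type*} (E : V → V → Prop) (hrefl : GRefl E) (hloc : GLocFin E)
    (k : ℕ) (hk : 1 ≤ k) (hsep : GSep E k) (X Y : Set V)
    (hX : GFrag E k X) (hY : GFrag E k Y) (hXY : k ≤ (X ∩ Y).ncard)
    (hext : k ≤ (GExt E X ∩ GExt E Y).ncard) :
    GFrag E k (X ∩ Y) := by
  obtain ⟨hXf, hXk, hXe, hXb⟩ := hX
  obtain ⟨hYf, hYk, hYe, hYb⟩ := hY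
  -- ext X is finite
  have hExtXf : (GExt E X).Finite := by
    by_contra h
    rw [Set.Infinite.ncard (by exact h)] at hXe
    omega
  -- the universe is finite
  have hV : (Set.univ : Set V).Finite := by
    have : (Set.univ : Set V) ⊆ GImg E X ∪ GExt E X := by
      intro v _
      by_cases h : v ∈ GImg E X
      · exact Or.inl h
      · exact Or.inr h
    exact Set.Finite.subset ((gimg_finite hloc hXf).union hExtXf) this
  have fin : ∀ S : Set V, S.Finite := fun S => hV.subset (Set.subset_univ S)
  -- abbreviations
  set BX := GBd E X with hBX
  set BY := GBd E Y with hBY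
  -- ext (X ∩ Y) ⊇ ext X ∩ ext Y
  have hextsub : GExt E X ∩ GExt E Y ⊆ GExt E (X ∩ Y) := by
    intro v ⟨hv, _⟩
    exact fun h => hv (gimg_mono Set.inter_subset_left h)
  have hextXY : k ≤ (GExt E (X ∩ Y)).ncard :=
    le_trans hext (Set.ncard_le_ncard hextsub (fin _))
  -- ext (X ∪ Y) = ext X ∩ ext Y
  have hextU : GExt E (X ∪ Y) = GExt E X ∩ GExt E Y := by
    simp [GExt, gimg_union, Set.compl_union]
  -- κ ≤ |∂(X∩Y)|
  have hmemI : (GBd E (X ∩ Y)).ncard ∈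
      {n | ∃ Z : Set V, Z.Finite ∧ k ≤ Z.ncard ∧ k ≤ (GExt E Z).ncard ∧ (GBd E Z).ncard = n} :=
    ⟨X ∩ Y, fin _, hXY, hextXY, rfl⟩
  have hκI : GKappa E k ≤ (GBd E (X ∩ Y)).ncard := Nat.sInf_le hmemI
  -- κ ≤ |∂(X∪Y)|
  have hκU : GKappa E k ≤ (GBd E (X ∪ Y)).ncard := by
    apply Nat.sInf_le
    refine ⟨X ∪ Y, fin _, le_trans hXk (Set.ncard_le_ncard Set.subset_union_left (fin _)), ?_, rfl⟩
    rw [hextU]; exact hext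
  -- submodularity pieces
  have h1 : GBd E (X ∩ Y) ⊆ (BX ∩ Y) ∪ (X ∩ BY) ∪ (BX ∩ BY) := by
    rintro v ⟨hvI, hvN⟩
    have hvX : v ∈ GImg E X := gimg_mono Set.inter_subset_left hvI
    have hvY : v ∈ GImg E Y := gimg_mono Set.inter_subset_right hvI
    by_cases hX' : v ∈ X
    · have hY' : v ∉ Y := fun h => hvN ⟨hX', h⟩
      exact Or.inl (Or.inr ⟨hX', hvY, hY'⟩)
    · by_cases hY' : v ∈ Y
      · exact Or.inl (Or.inl ⟨⟨hvX, hX'⟩, hY'⟩)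
      · exact Or.inr ⟨⟨hvX, hX'⟩, hvY, hY'⟩
  have h2 : GBd E (X ∪ Y) ⊆ (BX \ GImg E Y) ∪ (BY \ GImg E X) ∪ (BX ∩ BY) := by
    rintro v ⟨hvI, hvN⟩
    rw [gimg_union] at hvI
    have hX' : v ∉ X := fun h => hvN (Or.inl h)
    have hY' : v ∉ Y := fun h => hvN (Or.inr h)
    rcases hvI with hvX | hvY
    · by_cases hIY : v ∈ GImg E Y
      · exact Or.inr ⟨⟨hvX, hX'⟩, hIY, hY'⟩
      · exact Or.inl (Or.inl ⟨⟨hvX, hX'⟩, hIY⟩)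
    · by_cases hIX : v ∈ GImg E X
      · exact Or.inr ⟨⟨hIX, hX'⟩, hvY, hY'⟩
      · exact Or.inl (Or.inr ⟨⟨hvY, hY'⟩, hIX⟩)
  -- cardinality bounds
  have S1 : (GBd E (X ∩ Y)).ncard ≤ (BX ∩ Y).ncard + (X ∩ BY).ncard + (BX ∩ BY).ncard :=
    le_trans (Set.ncard_le_ncard h1 ((fin _).union (fin _)))
      (le_trans (Set.ncard_union_le _ _) (by
        have := Set.ncard_union_le (BX ∩ Y) (X ∩ BY); omega))
  have S2 : (GBd E (X ∪ Y)).ncard ≤ (BX \ GImg E Y).ncard + (BY \ GImg E X).ncard + (BX ∩ BY).ncard :=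
    le_trans (Set.ncard_le_ncard h2 ((fin _).union (fin _)))
      (le_trans (Set.ncard_union_le _ _) (by
        have := Set.ncard_union_le (BX \ GImg E Y) (BY \ GImg E X); omega))
  -- disjoint unions inside BX and BY
  have hYI : Y ⊆ GImg E Y := gsubset_img hrefl Y
  have hXI : X ⊆ GImg E X := gsubset_img hrefl X
  have S3 : (BX ∩ Y).ncard + (BX ∩ BY).ncard + (BX \ GImg E Y).ncard ≤ BX.ncard := by
    have d1 : Disjoint (BX ∩ Y) (BX ∩ BY) := by
      rw [Set.disjoint_left]; rintro v ⟨_, hv⟩ ⟨_, _, hv'⟩; exact hv' hv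
    have d2 : Disjoint ((BX ∩ Y) ∪ (BX ∩ BY)) (BX \ GImg E Y) := by
      rw [Set.disjoint_left]
      rintro v (⟨_, hv⟩ | ⟨_, hv, _⟩) ⟨_, hv'⟩
      · exact hv' (hYI hv)
      · exact hv' hv
    have e1 := Set.ncard_union_eq d1 (fin _) (fin _)
    have e2 := Set.ncard_union_eq d2 (fin _) (fin _)
    have sub : ((BX ∩ Y) ∪ (BX ∩ BY)) ∪ (BX \ GImg E Y) ⊆ BX := by
      rintro v ((⟨h, _⟩ | ⟨h, _⟩) | ⟨h, _⟩) <;> exact h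
    have := Set.ncard_le_ncard sub (fin _)
    omega
  have S4 : (X ∩ BY).ncard + (BX ∩ BY).ncard + (BY \ GImg E X).ncard ≤ BY.ncard := by
    have d1 : Disjoint (X ∩ BY) (BX ∩ BY) := by
      rw [Set.disjoint_left]; rintro v ⟨hv, _⟩ ⟨⟨_, hv'⟩, _⟩; exact hv' hv
    have d2 : Disjoint ((X ∩ BY) ∪ (BX ∩ BY)) (BY \ GImg E X) := by
      rw [Set.disjoint_left]
      rintro v (⟨hv, _⟩ | ⟨⟨hv, _⟩, _⟩) ⟨_, hv'⟩
      · exact hv' (hXI hv)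
      · exact hv' hv
    have e1 := Set.ncard_union_eq d1 (fin _) (fin _)
    have e2 := Set.ncard_union_eq d2 (fin _) (fin _)
    have sub : ((X ∩ BY) ∪ (BX ∩ BY)) ∪ (BY \ GImg E X) ⊆ BY := by
      rintro v ((⟨_, h⟩ | ⟨_, h⟩) | ⟨h, _⟩) <;> exact h
    have := Set.ncard_le_ncard sub (fin _)
    omega
  refine ⟨fin _, hXY, hextXY, ?_⟩
  omega
end

section
/- Let Γ = (V,E) be a reflexive locally finite k-separable relation and let X, Y be k-fragments with |X ∩ Y| ≥ k and |X| ≤ |∇(Y)|. Then |∇(X) ∩ ∇(Y)| ≥ |X ∩ Y| ≥ k, and X ∩ Y is a k-fragment. -/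
variable {V : Type*}

section AuxStmt14

variable {E : V → V → Prop}

lemma gimg_fin14 (hloc : GLocFin E) {X : Set V} (hX : X.Finite) : (GImg E X).Finite := by
  have h : GImg E X ⊆ ⋃ x ∈ X, {y | E x y} := by
    rintro y ⟨x, hx, hxy⟩; exact Set.mem_biUnion hx hxy
  exact (hX.biUnion fun x _ => (hloc x).1).subset h

lemma split3_14 {s A B C : Set V} (hs : s.Finite)
    (hcov : ∀ z, z ∈ A ∨ z ∈ B ∨ z ∈ C)
    (hAB : ∀ z, z ∈ A → z ∈ B → False)
    (hAC : ∀ z, z ∈ A → z ∈ C → False)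
    (hBC : ∀ z, z ∈ B → z ∈ C → False) :
    s.ncard = (s ∩ A).ncard + (s ∩ B).ncard + (s ∩ C).ncard := by
  have hu : s = (s ∩ A) ∪ ((s ∩ B) ∪ (s ∩ C)) := by
    ext z; constructor
    · intro hz
      rcases hcov z with h | h | h
      · exact Or.inl ⟨hz, h⟩
      · exact Or.inr (Or.inl ⟨hz, h⟩)
      · exact Or.inr (Or.inr ⟨hz, h⟩)
    · rintro (⟨h, _⟩ | ⟨h, _⟩ | ⟨h, _⟩) <;> exact h
  have d1 : Disjoint (s ∩ B) (s ∩ C) := by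
    rw [Set.disjoint_left]; rintro z ⟨_, hb⟩ ⟨_, hc⟩; exact hBC z hb hc
  have d2 : Disjoint (s ∩ A) ((s ∩ B) ∪ (s ∩ C)) := by
    rw [Set.disjoint_left]; rintro z ⟨_, ha⟩ (⟨_, hb⟩ | ⟨_, hc⟩)
    · exact hAB z ha hb
    · exact hAC z ha hc
  calc s.ncard = ((s ∩ A) ∪ ((s ∩ B) ∪ (s ∩ C))).ncard := by rw [← hu]
    _ = (s ∩ A).ncard + ((s ∩ B) ∪ (s ∩ C)).ncard :=
        Set.ncard_union_eq d2 (hs.inter_of_left A) ((hs.inter_of_left B).union (hs.inter_of_left C))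
    _ = _ := by
        rw [Set.ncard_union_eq d1 (hs.inter_of_left B) (hs.inter_of_left C), add_assoc]

lemma part14 (hrefl : GRefl E) (Z : Set V) :
    (∀ z, z ∈ Z ∨ z ∈ GBd E Z ∨ z ∈ GExt E Z) ∧
    (∀ z, z ∈ Z → z ∈ GBd E Z → False) ∧
    (∀ z, z ∈ Z → z ∈ GExt E Z → False) ∧
    (∀ z, z ∈ GBd E Z → z ∈ GExt E Z → False) := by
  refine ⟨fun z => ?_, fun z hz hb => hb.2 hz,
    fun z hz hn => hn ⟨z, hz, hrefl z⟩, fun z hb hn => hn hb.1⟩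
  by_cases hz : z ∈ Z
  · exact Or.inl hz
  by_cases hg : z ∈ GImg E Z
  · exact Or.inr (Or.inl ⟨hg, hz⟩)
  · exact Or.inr (Or.inr hg)

end AuxStmt14

theorem stmt14 {V : Type*} (E : V → V → Prop) (hrefl : GRefl E) (hloc : GLocFin E)
    (k : ℕ) (hk : 1 ≤ k) (hsep : GSep E k) (X Y : Set V)
    (hX : GFrag E k X) (hY : GFrag E k Y) (hXY : k ≤ (X ∩ Y).ncard)
    (hsize : X.ncard ≤ (GExt E Y).ncard) :
    (X ∩ Y).ncard ≤ (GExt E X ∩ GExt E Y).ncard ∧ GFrag E k (X ∩ Y) := by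
  obtain ⟨hXf, hXk, hXe, hXb⟩ := hX
  obtain ⟨hYf, hYk, hYe, hYb⟩ := hY
  -- the universe is finite
  have hNXf : (GExt E X).Finite := Set.finite_of_ncard_ne_zero (by omega)
  have hGXf : (GImg E X).Finite := gimg_fin14 hloc hXf
  have hVf : (Set.univ : Set V).Finite := by
    refine (hGXf.union hNXf).subset fun z _ => ?_
    by_cases h : z ∈ GImg E X
    · exact Or.inl h
    · exact Or.inr h
  have hfin : ∀ s : Set V, s.Finite := fun s => hVf.subset (Set.subset_univ s)
  obtain ⟨covX, dXB, dXN, dXBN⟩ := part14 hrefl X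
  obtain ⟨covY, dYB, dYN, dYBN⟩ := part14 hrefl Y
  -- splits
  have hBXs : (GBd E X).ncard =
      (GBd E X ∩ Y).ncard + (GBd E X ∩ GBd E Y).ncard + (GBd E X ∩ GExt E Y).ncard :=
    split3_14 (hfin _) covY dYB dYN dYBN
  have hBYs : (GBd E Y).ncard =
      (GBd E Y ∩ X).ncard + (GBd E Y ∩ GBd E X).ncard + (GBd E Y ∩ GExt E X).ncard :=
    split3_14 (hfin _) covX dXB dXN dXBN
  have hXs : X.ncard = (X ∩ Y).ncard + (X ∩ GBd E Y).ncard + (X ∩ GExt E Y).ncard :=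
    split3_14 (hfin _) covY dYB dYN dYBN
  have hNYs : (GExt E Y).ncard =
      (GExt E Y ∩ X).ncard + (GExt E Y ∩ GBd E X).ncard + (GExt E Y ∩ GExt E X).ncard :=
    split3_14 (hfin _) covX dXB dXN dXBN
  -- boundary of the intersection
  have hBi : GBd E (X ∩ Y) ⊆
      (X ∩ GBd E Y) ∪ ((GBd E X ∩ Y) ∪ (GBd E X ∩ GBd E Y)) := by
    rintro z ⟨⟨x, ⟨hxX, hxY⟩, hxz⟩, hzn⟩
    have hgx : z ∈ GImg E X := ⟨x, hxX, hxz⟩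
    have hgy : z ∈ GImg E Y := ⟨x, hxY, hxz⟩
    by_cases hzX : z ∈ X
    · have hzY : z ∉ Y := fun h => hzn ⟨hzX, h⟩
      exact Or.inl ⟨hzX, hgy, hzY⟩
    by_cases hzY : z ∈ Y
    · exact Or.inr (Or.inl ⟨⟨hgx, hzX⟩, hzY⟩)
    · exact Or.inr (Or.inr ⟨⟨hgx, hzX⟩, hgy, hzY⟩)
  have hBiC : (GBd E (X ∩ Y)).ncard ≤
      (X ∩ GBd E Y).ncard + ((GBd E X ∩ Y).ncard + (GBd E X ∩ GBd E Y).ncard) :=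
    le_trans (Set.ncard_le_ncard hBi (hfin _))
      (le_trans (Set.ncard_union_le _ _)
        (by exact Nat.add_le_add_left (Set.ncard_union_le _ _) _))
  -- boundary of the union
  have hBu : GBd E (X ∪ Y) ⊆
      (GBd E X ∩ GBd E Y) ∪ ((GBd E X ∩ GExt E Y) ∪ (GBd E Y ∩ GExt E X)) := by
    rintro z ⟨⟨x, hx, hxz⟩, hzn⟩
    have hzX : z ∉ X := fun h => hzn (Or.inl h)
    have hzY : z ∉ Y := fun h => hzn (Or.inr h)
    rcases hx with hx | hx
    · have hbx : z ∈ GBd E X := ⟨⟨x, hx, hxz⟩, hzX⟩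
      by_cases hgy : z ∈ GImg E Y
      · exact Or.inl ⟨hbx, hgy, hzY⟩
      · exact Or.inr (Or.inl ⟨hbx, hgy⟩)
    · have hby : z ∈ GBd E Y := ⟨⟨x, hx, hxz⟩, hzY⟩
      by_cases hgx : z ∈ GImg E X
      · exact Or.inl ⟨⟨hgx, hzX⟩, hby⟩
      · exact Or.inr (Or.inr ⟨hby, hgx⟩)
  have hBuC : (GBd E (X ∪ Y)).ncard ≤
      (GBd E X ∩ GBd E Y).ncard + ((GBd E X ∩ GExt E Y).ncard + (GBd E Y ∩ GExt E X).ncard) :=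
    le_trans (Set.ncard_le_ncard hBu (hfin _))
      (le_trans (Set.ncard_union_le _ _)
        (by exact Nat.add_le_add_left (Set.ncard_union_le _ _) _))
  -- κ ≤ |∂(X ∩ Y)|
  have hsubN : GExt E Y ⊆ GExt E (X ∩ Y) := by
    intro z hz hg
    obtain ⟨x, hx, hxz⟩ := hg
    exact hz ⟨x, hx.2, hxz⟩
  have hNin : k ≤ (GExt E (X ∩ Y)).ncard :=
    le_trans hYe (Set.ncard_le_ncard hsubN (hfin _))
  have kIn : GKappa E k ≤ (GBd E (X ∩ Y)).ncard :=
    Nat.sInf_le ⟨X ∩ Y, hXf.inter_of_left Y, hXY, hNin, rfl⟩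
  -- orientation normalizations
  have e1 : (GBd E Y ∩ X).ncard = (X ∩ GBd E Y).ncard := by rw [Set.inter_comm]
  have e2 : (GBd E Y ∩ GBd E X).ncard = (GBd E X ∩ GBd E Y).ncard := by rw [Set.inter_comm]
  have e3 : (GExt E Y ∩ X).ncard = (X ∩ GExt E Y).ncard := by rw [Set.inter_comm]
  have e4 : (GExt E Y ∩ GBd E X).ncard = (GBd E X ∩ GExt E Y).ncard := by rw [Set.inter_comm]
  have e5 : (GExt E Y ∩ GExt E X).ncard = (GExt E X ∩ GExt E Y).ncard := by rw [Set.inter_comm]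
  have e6 : (GBd E Y ∩ GExt E X).ncard = (GExt E X ∩ GBd E Y).ncard := by rw [Set.inter_comm]
  -- Goal A: |∂X ∩ ∇Y| ≤ |X ∩ ∂Y|
  have goalA : (GBd E X ∩ GExt E Y).ncard ≤ (X ∩ GBd E Y).ncard := by omega
  -- Goal B: |X ∩ Y| ≤ |∇X ∩ ∇Y|
  have goalB : (X ∩ Y).ncard ≤ (GExt E X ∩ GExt E Y).ncard := by omega
  -- κ ≤ |∂(X ∪ Y)|
  have hNu : GExt E (X ∪ Y) = GExt E X ∩ GExt E Y := by
    ext z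
    simp only [GExt, GImg, Set.mem_compl_iff, Set.mem_setOf_eq, Set.mem_inter_iff,
      Set.mem_union]
    constructor
    · intro h
      exact ⟨fun ⟨x, hx, he⟩ => h ⟨x, Or.inl hx, he⟩, fun ⟨x, hx, he⟩ => h ⟨x, Or.inr hx, he⟩⟩
    · rintro ⟨h1, h2⟩ ⟨x, hx | hx, he⟩
      · exact h1 ⟨x, hx, he⟩
      · exact h2 ⟨x, hx, he⟩
  have kUn : GKappa E k ≤ (GBd E (X ∪ Y)).ncard := by
    refine Nat.sInf_le ⟨X ∪ Y, hXf.union hYf,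
      le_trans hXk (Set.ncard_le_ncard Set.subset_union_left (hfin _)), ?_, rfl⟩
    rw [hNu]
    exact le_trans hXY goalB
  -- conclude |∂(X ∩ Y)| = κ
  have goalC : (GBd E (X ∩ Y)).ncard = GKappa E k := by omega
  exact ⟨goalB, hXf.inter_of_left Y, hXY, hNin, goalC⟩
end
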